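/- The polynomial x³ − 3x² + (3/2)x − 1/6 has exactly one root in the open interval (1/6, 1/2). -/

import Mathlib

/-! On `[1/6, 5/12]` the cubic is positive, because it equals
`(x - 1/6)(x - 5/12)(x - 29/12) + x/48 + 1/864` and the product is nonnegative there.
On `[5/12, 1/2]` it is strictly decreasing and changes sign, so it has exactly one root there. -/

open Set

noncomputable def alexanderCubic (x : ℝ) : ℝ := x ^ 3 - 3 * x ^ 2 + (3 / 2) * x - 1 / 6

lemma alexanderCubic_eq (x : ℝ) :
    alexanderCubic x = (x - 1 / 6) * (x - 5 / 12) * (x - 29 / 12) + x / 48 + 1 / 864 := by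
  unfold alexanderCubic; ring

lemma alexanderCubic_pos {x : ℝ} (h₁ : 1 / 6 ≤ x) (h₂ : x ≤ 5 / 12) : 0 < alexanderCubic x := by
  have hprod : 0 ≤ (x - 1 / 6) * (x - 5 / 12) * (x - 29 / 12) :=
    mul_nonneg_of_nonpos_of_nonpos
      (mul_nonpos_of_nonneg_of_nonpos (by linarith) (by linarith)) (by linarith)
  rw [alexanderCubic_eq]
  linarith

lemma alexanderCubic_sub (x y : ℝ) :
    alexanderCubic x - alexanderCubic y = (x - y) * (x ^ 2 + x * y + y ^ 2 - 3 * (x + y) + 3 / 2) := by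
  unfold alexanderCubic; ring

lemma alexanderCubic_strictAntiOn : StrictAntiOn alexanderCubic (Icc (5 / 12) (1 / 2)) := by
  rintro x ⟨hx₁, hx₂⟩ y ⟨hy₁, hy₂⟩ hxy
  have hdiff : alexanderCubic y - alexanderCubic x < 0 := by
    rw [alexanderCubic_sub]
    -- `x ^ 2 + x * y + y ^ 2 ≤ 3 / 4` and `3 * (x + y) ≥ 5 / 2`, so the second factor is `≤ -1 / 4`
    exact mul_neg_of_pos_of_neg (sub_pos.mpr hxy) (by nlinarith)
  linarith

lemma exists_alexanderCubic_eq_zero : ∃ x ∈ Ioo (5 / 12 : ℝ) (1 / 2), alexanderCubic x = 0 := by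
  have hcont : ContinuousOn alexanderCubic (Icc (5 / 12) (1 / 2)) := by
    unfold alexanderCubic; fun_prop
  refine intermediate_value_Ioo' (by norm_num) hcont ⟨?_, ?_⟩ <;>
    norm_num [alexanderCubic]

theorem alexander_dirk_root :
    ∃! x : ℝ, x ∈ Set.Ioo (1/6 : ℝ) (1/2) ∧ x^3 - 3*x^2 + (3/2)*x - 1/6 = 0 := by
  obtain ⟨x, hx, hpx⟩ := exists_alexanderCubic_eq_zero
  refine ⟨x, ⟨⟨by linarith [hx.1], hx.2⟩, hpx⟩, ?_⟩
  rintro y ⟨hy, hpy⟩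
  have hy' : 5 / 12 < y := by
    by_contra! h
    exact (alexanderCubic_pos hy.1.le h).ne' hpy
  exact alexanderCubic_strictAntiOn.injOn ⟨hy'.le, hy.2.le⟩ ⟨hx.1.le, hx.2.le⟩ (hpy.trans hpx.symm)
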